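/- Depth-one normal form: let F be a first-order formula with counting quantifiers of quantifier depth at most one, of counting degree at most k, with FV(F) ⊆ {x₁,…,xₙ}. Then F is logically equivalent to a finite disjunction of k-counting-star formulas F_C with FV(F_C) = {x₁,…,xₙ}. -/

import Mathlib

/-!
Every environment satisfies a `k`-counting-star formula describing it: which of the `xᵢ`
coincide, the atomic type of the distinct ones, and, for every `x`-extension, the number of
elements realising it, capped at `k + 1`.

Two models of the same well-formed counting-star formula agree on every formula of quantifier
depth at most one and counting degree at most `k`. In `∃^q v. G` with `G` quantifier-free, the
truth of `G` at an element `d` depends only on the truth values of the `x`-extension atoms at `d`,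
once every other variable is renamed to its representative. The number of elements with given
such truth values is the same in both models up to the cap `k + 1`: it is `0` or `1` on the values
of the `xᵢ`, and is prescribed by `γ` elsewhere. Hence `F` is equivalent to the disjunction of the
finitely many well-formed counting-star formulas that entail it.
-/

/-- An environment (model with variable assignment): interprets unary predicate
symbols from `𝒜`, binary predicate symbols from `ℱ`, and variables from `V`
over the domain `D`. -/
structure Env (𝒜 ℱ V D : Type) where
  un : 𝒜 → D → Prop
  bin : ℱ → D → D → Prop
  var : V → D

variable {𝒜 ℱ V D : Type}

/-- `e.Split e₁ e₂`: the relations of `e` split as a disjoint union into `e₁`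
and `e₂`, and the variable assignments agree with those of `e`. -/
def Env.Split (e e₁ e₂ : Env 𝒜 ℱ V D) : Prop :=
  e₁.var = e.var ∧ e₂.var = e.var ∧
  (∀ A d, (e.un A d ↔ (e₁.un A d ∨ e₂.un A d)) ∧ ¬(e₁.un A d ∧ e₂.un A d)) ∧
  (∀ f d₁ d₂, (e.bin f d₁ d₂ ↔ (e₁.bin f d₁ d₂ ∨ e₂.bin f d₁ d₂)) ∧
      ¬(e₁.bin f d₁ d₂ ∧ e₂.bin f d₁ d₂))

/-- Spatial conjunction of predicates on environments. -/
def spand (P Q : Env 𝒜 ℱ V D → Prop) (e : Env 𝒜 ℱ V D) : Prop :=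
  ∃ e₁ e₂, e.Split e₁ e₂ ∧ P e₁ ∧ Q e₂

/-! ## Syntax and semantics of first-order logic with counting quantifiers -/

/-- Counting quantifier specifications: `∃^{=k}` and `∃^{≥k}`. -/
inductive CQ : Type where
  | exact : ℕ → CQ
  | atLeast : ℕ → CQ
deriving DecidableEq

/-- A counting quantifier specification is satisfied by a cardinality `c`. -/
def CQ.sat : CQ → ℕ → Prop
  | .exact k, c => c = k
  | .atLeast k, c => k ≤ c

/-- `c ∈ C_{k+1}`: `c` is `=i` for some `i ≤ k`, or `≥ k+1`. -/
def CQ.degLE (k : ℕ) : CQ → Prop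
  | .exact i => i ≤ k
  | .atLeast i => i = k + 1

/-- Formulas of first-order predicate calculus with equality and counting
quantifiers, over unary symbols `𝒜`, binary symbols `ℱ`, variables `V`. -/
inductive Fml (𝒜 ℱ V : Type) : Type where
  | un : 𝒜 → V → Fml 𝒜 ℱ V
  | bin : ℱ → V → V → Fml 𝒜 ℱ V
  | eq : V → V → Fml 𝒜 ℱ V
  | fls : Fml 𝒜 ℱ V
  | and : Fml 𝒜 ℱ V → Fml 𝒜 ℱ V → Fml 𝒜 ℱ V
  | or : Fml 𝒜 ℱ V → Fml 𝒜 ℱ V → Fml 𝒜 ℱ V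
  | not : Fml 𝒜 ℱ V → Fml 𝒜 ℱ V
  | cnt : CQ → V → Fml 𝒜 ℱ V → Fml 𝒜 ℱ V

/-- Update the value of a variable in an environment. -/
def Env.updVar [DecidableEq V] (e : Env 𝒜 ℱ V D) (v : V) (d : D) : Env 𝒜 ℱ V D :=
  { e with var := Function.update e.var v d }

/-- Satisfaction of a formula in an environment. -/
def Fml.Sat [DecidableEq V] : Fml 𝒜 ℱ V → Env 𝒜 ℱ V D → Prop
  | .un A v, e => e.un A (e.var v)
  | .bin f v w, e => e.bin f (e.var v) (e.var w)
  | .eq v w, e => e.var v = e.var w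
  | .fls, _ => False
  | .and F G, e => F.Sat e ∧ G.Sat e
  | .or F G, e => F.Sat e ∨ G.Sat e
  | .not F, e => ¬ F.Sat e
  | .cnt c v F, e => c.sat {d : D | F.Sat (e.updVar v d)}.ncard

/-- Quantifier depth; each counting quantifier counts as one quantifier. -/
def Fml.qdepth : Fml 𝒜 ℱ V → ℕ
  | .un _ _ => 0
  | .bin _ _ _ => 0
  | .eq _ _ => 0
  | .fls => 0
  | .and F G => max F.qdepth G.qdepth
  | .or F G => max F.qdepth G.qdepth
  | .not F => F.qdepth
  | .cnt _ _ F => F.qdepth + 1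

/-- Free variables of a formula. -/
def Fml.fv [DecidableEq V] : Fml 𝒜 ℱ V → Finset V
  | .un _ v => {v}
  | .bin _ v w => {v, w}
  | .eq v w => {v, w}
  | .fls => ∅
  | .and F G => F.fv ∪ G.fv
  | .or F G => F.fv ∪ G.fv
  | .not F => F.fv
  | .cnt _ v F => F.fv.erase v

/-- `F.DegLE k`: `F` has counting degree at most `k`, i.e. all counting
quantifiers of `F` are `∃^c` with `c ∈ C_{k+1}`. -/
def Fml.DegLE (k : ℕ) : Fml 𝒜 ℱ V → Prop
  | .un _ _ => True
  | .bin _ _ _ => True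
  | .eq _ _ => True
  | .fls => True
  | .and F G => F.DegLE k ∧ G.DegLE k
  | .or F G => F.DegLE k ∧ G.DegLE k
  | .not F => F.DegLE k
  | .cnt c _ F => c.degLE k ∧ F.DegLE k

/-! ## Atomic formulas, complete atomic types -/

/-- Atomic formulas over unary symbols `𝒜`, binary symbols `ℱ`, variables `V`
(including equality atoms). -/
inductive Atom (𝒜 ℱ V : Type) : Type where
  | un : 𝒜 → V → Atom 𝒜 ℱ V
  | bin : ℱ → V → V → Atom 𝒜 ℱ V
  | eq : V → V → Atom 𝒜 ℱ V
deriving DecidableEq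

def Atom.toFml : Atom 𝒜 ℱ V → Fml 𝒜 ℱ V
  | .un A v => .un A v
  | .bin f v w => .bin f v w
  | .eq v w => .eq v w

/-- The variables occurring in an atomic formula. -/
def Atom.varset [DecidableEq V] : Atom 𝒜 ℱ V → Finset V
  | .un _ v => {v}
  | .bin _ v w => {v, w}
  | .eq v w => {v, w}

/-- Whether an atom is an equality atom. -/
def Atom.isEq : Atom 𝒜 ℱ V → Bool
  | .eq _ _ => true
  | _ => false

def atomEquiv (𝒜 ℱ V : Type) :
    Atom 𝒜 ℱ V ≃ ((𝒜 × V) ⊕ ((ℱ × V × V) ⊕ (V × V))) where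
  toFun a := match a with
    | .un A v => Sum.inl (A, v)
    | .bin f v w => Sum.inr (Sum.inl (f, v, w))
    | .eq v w => Sum.inr (Sum.inr (v, w))
  invFun s := match s with
    | Sum.inl (A, v) => .un A v
    | Sum.inr (Sum.inl (f, v, w)) => .bin f v w
    | Sum.inr (Sum.inr (v, w)) => .eq v w
  left_inv a := by cases a <;> rfl
  right_inv s := by rcases s with ⟨A, v⟩ | ⟨f, v, w⟩ | ⟨v, w⟩ <;> rfl

instance [Fintype 𝒜] [Fintype ℱ] [Fintype V] : Fintype (Atom 𝒜 ℱ V) :=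
  Fintype.ofEquiv _ (atomEquiv 𝒜 ℱ V).symm

/-- Conjunction of a list of formulas (empty conjunction is `¬⊥`, i.e. true). -/
def listConj (l : List (Fml 𝒜 ℱ V)) : Fml 𝒜 ℱ V := l.foldr .and (.not .fls)

/-- Disjunction of a list of formulas (empty disjunction is `⊥`). -/
def listDisj (l : List (Fml 𝒜 ℱ V)) : Fml 𝒜 ℱ V := l.foldr .or .fls

/-- Conjunction of a list of atoms, each taken positively or negatively
according to the sign assignment `σ`. -/
def signedConj (l : List (Atom 𝒜 ℱ V)) (σ : Atom 𝒜 ℱ V → Bool) : Fml 𝒜 ℱ V :=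
  listConj (l.map fun a => if σ a then a.toFml else .not a.toFml)

section AtomicTypes

variable [Fintype 𝒜] [DecidableEq 𝒜] [Fintype ℱ] [DecidableEq ℱ]
  [Fintype V] [DecidableEq V]

/-- The list of all atomic formulas whose variables are among `xs`. -/
noncomputable def atomsOn (𝒜 ℱ : Type) [Fintype 𝒜] [DecidableEq 𝒜] [Fintype ℱ] [DecidableEq ℱ]
    {V : Type} [Fintype V] [DecidableEq V] (xs : Finset V) : List (Atom 𝒜 ℱ V) :=
  (Finset.univ : Finset (Atom 𝒜 ℱ V)).toList.filter fun a => decide (a.varset ⊆ xs)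

/-- The complete atomic type (CAT) formula with free variables `{x₁,…,xₙ}`
(the whole of `V`) determined by a sign assignment `σ`: the conjunction
containing, for each atomic formula `C` over `V`, the conjunct `C` if
`σ C = true` and the conjunct `¬C` otherwise. -/
noncomputable def catFml (σ : Atom 𝒜 ℱ V → Bool) : Fml 𝒜 ℱ V :=
  signedConj (Finset.univ : Finset (Atom 𝒜 ℱ V)).toList σ

/-- The CAT formula over the variable subset `xs` determined by `σ`. -/
noncomputable def gccatFml (xs : Finset V) (σ : Atom 𝒜 ℱ V → Bool) : Fml 𝒜 ℱ V :=
  signedConj (atomsOn 𝒜 ℱ xs) σ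

/-- `σ` is a general-case CAT (GCCAT) sign assignment over the variables `xs`:
the conjunct `xᵢ = xⱼ` occurs (positively) iff `i = j`, and (canonically) `σ`
is `false` outside the atoms over `xs`. -/
noncomputable def gccatSignB (xs : Finset V) (σ : Atom 𝒜 ℱ V → Bool) : Bool :=
  (xs.toList.all fun i => xs.toList.all fun j => σ (.eq i j) == decide (i = j)) &&
  ((Finset.univ : Finset (Atom 𝒜 ℱ V)).toList.all fun a =>
      decide (a.varset ⊆ xs) || !σ a)

/-- `a` is an atom of an `x`-extension: its variables are among `insert x xs`
and `x` actually occurs in it. -/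
def isExtAtom (xs : Finset V) (x : V) (a : Atom 𝒜 ℱ V) : Bool :=
  decide (a.varset ⊆ insert x xs) && decide (x ∈ a.varset)

/-- The list of atoms of `x`-extensions of GCCAT formulas over `xs`. -/
noncomputable def extAtoms (𝒜 ℱ : Type) [Fintype 𝒜] [DecidableEq 𝒜] [Fintype ℱ] [DecidableEq ℱ]
    {V : Type} [Fintype V] [DecidableEq V] (xs : Finset V) (x : V) : List (Atom 𝒜 ℱ V) :=
  (Finset.univ : Finset (Atom 𝒜 ℱ V)).toList.filter (isExtAtom xs x)

/-- The `x`-extension formula determined by a sign assignment `τ`. -/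
noncomputable def extFml (xs : Finset V) (x : V) (τ : Atom 𝒜 ℱ V → Bool) : Fml 𝒜 ℱ V :=
  signedConj (extAtoms 𝒜 ℱ xs x) τ

/-- `τ` is the sign assignment of an `x`-extension of a GCCAT formula over
`xs`: `x = x` positive, `x = xᵢ` and `xᵢ = x` negative, and (canonically) `τ`
is `false` outside extension atoms. -/
noncomputable def extSignB (xs : Finset V) (x : V) (τ : Atom 𝒜 ℱ V → Bool) : Bool :=
  τ (.eq x x) &&
  (xs.toList.all fun v => !τ (.eq x v) && !τ (.eq v x)) &&
  ((Finset.univ : Finset (Atom 𝒜 ℱ V)).toList.all fun a => isExtAtom xs x a || !τ a)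

/-- The list of all sign assignments of `x`-extensions over `xs`. -/
noncomputable def extSigns (𝒜 ℱ : Type) [Fintype 𝒜] [DecidableEq 𝒜] [Fintype ℱ] [DecidableEq ℱ]
    {V : Type} [Fintype V] [DecidableEq V] (xs : Finset V) (x : V) :
    List (Atom 𝒜 ℱ V → Bool) :=
  (Finset.univ : Finset (Atom 𝒜 ℱ V → Bool)).toList.filter (extSignB xs x)

/-- Merge of two sign assignments: the union of their positive literals. -/
def mergeSign (τ₁ τ₂ : Atom 𝒜 ℱ V → Bool) : Atom 𝒜 ℱ V → Bool :=
  fun a => τ₁ a || τ₂ a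

end AtomicTypes

/-- `T₁ ⊛ T₂` is defined iff the sets `S(T₁)`, `S(T₂)` of positive
non-equality literals are disjoint. -/
def MergeOK (τ₁ τ₂ : Atom 𝒜 ℱ V → Bool) : Prop :=
  ∀ a : Atom 𝒜 ℱ V, a.isEq = false → ¬(τ₁ a = true ∧ τ₂ a = true)

/-! ## Counting star formulas.

Variables are `Option (Fin n)`: `some i` is the free variable `xᵢ`
(`i : Fin n`), and `none` is the bound variable `x` of the counting
quantifiers. -/

/-- Data determining a counting-star formula: the set `xs` of variables of the
GCCAT part (the remaining free variables are the `yⱼ`'s), the map `ι` giving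
the equality conjuncts `yⱼ = x_{iⱼ}`, the GCCAT sign assignment `σ` over `xs`,
and the counting function `γ` on `x`-extensions. -/
structure CSData (𝒜 ℱ : Type) (n : ℕ) where
  xs : Finset (Fin n)
  ι : Fin n → Fin n
  σ : Atom 𝒜 ℱ (Option (Fin n)) → Bool
  γ : (Atom 𝒜 ℱ (Option (Fin n)) → Bool) → CQ

/-- The GCCAT variable set of a `CSData`, as a set of variables. -/
def CSData.xsO {𝒜 ℱ : Type} {n : ℕ} (c : CSData 𝒜 ℱ n) : Finset (Option (Fin n)) :=
  c.xs.image (fun i => some i)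

/-- Well-formedness of counting-star data, for counting degree `k`:
each `y ∉ xs` is equated to some variable of `xs`, `σ` is a GCCAT sign
assignment over `xs`, and every count `γ τ` lies in `C_{k+1}`. -/
def CSData.WF {𝒜 ℱ : Type} [Fintype 𝒜] [DecidableEq 𝒜] [Fintype ℱ] [DecidableEq ℱ]
    {n : ℕ} (k : ℕ) (c : CSData 𝒜 ℱ n) : Prop :=
  (∀ y, y ∉ c.xs → c.ι y ∈ c.xs) ∧
  gccatSignB c.xsO c.σ = true ∧
  (∀ τ : Atom 𝒜 ℱ (Option (Fin n)) → Bool, (c.γ τ).degLE k)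

/-- The `k`-counting-star formula determined by counting-star data:
`⋀_{j} yⱼ = x_{iⱼ} ∧ F ∧ ⋀_{F′ ∈ ext(F,x)} ∃^{γ(F′)} x. F′`. -/
noncomputable def csFml {𝒜 ℱ : Type}
    [Fintype 𝒜] [DecidableEq 𝒜] [Fintype ℱ] [DecidableEq ℱ] {n : ℕ}
    (c : CSData 𝒜 ℱ n) : Fml 𝒜 ℱ (Option (Fin n)) :=
  (listConj ((((Finset.univ : Finset (Fin n)) \ c.xs).toList).map fun y =>
      Fml.eq (some y) (some (c.ι y)))).and <|
  (gccatFml c.xsO c.σ).and <|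
  listConj ((extSigns 𝒜 ℱ c.xsO none).map fun τ =>
    Fml.cnt (c.γ τ) none (extFml c.xsO none τ))

theorem min_sum_min_eq {ι : Type*} (s : Finset ι) (f : ι → ℕ) (m : ℕ) :
    min (∑ i ∈ s, min (f i) m) m = min (∑ i ∈ s, f i) m := by
  induction s using Finset.cons_induction with
  | empty => simp
  | cons a s ha ih => rw [Finset.sum_cons, Finset.sum_cons]; omega

theorem ncard_preimage_finset_eq_sum {α T : Type*} [Finite α] [DecidableEq T] (f : α → T)
    (Q : Finset T) : (f ⁻¹' Q).ncard = ∑ t ∈ Q, {a | f a = t}.ncard := by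
  induction Q using Finset.induction_on with
  | empty => simp
  | insert t Q ht ih =>
    have hunion : f ⁻¹' ↑(insert t Q) = {a | f a = t} ∪ f ⁻¹' Q := by ext; simp
    rw [Finset.sum_insert ht, ← ih, hunion, Set.ncard_union_eq]
    exact Set.disjoint_left.2 fun a ha ha' => ht (ha ▸ ha')

theorem min_ncard_preimage_eq {α β T : Type*} [Finite α] [Finite β] [DecidableEq T]
    {f : α → T} {g : β → T} {m : ℕ}
    (h : ∀ t, min {a | f a = t}.ncard m = min {b | g b = t}.ncard m) (Q : Finset T) :
    min (f ⁻¹' Q).ncard m = min (g ⁻¹' Q).ncard m := by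
  rw [ncard_preimage_finset_eq_sum, ncard_preimage_finset_eq_sum, ← min_sum_min_eq,
    ← min_sum_min_eq Q fun t => {b | g b = t}.ncard]
  simp only [h]

theorem exists_eq_of_min_ncard_fiber_eq {α β T : Type*} [Finite α] {f : α → T} {g : β → T}
    {m : ℕ} (hm : 0 < m) {t : T} (h : min {a | f a = t}.ncard m = min {b | g b = t}.ncard m)
    {a : α} (ha : f a = t) : ∃ b, g b = t := by
  have : 0 < {a | f a = t}.ncard := (Set.ncard_pos).2 ⟨a, ha⟩
  exact Set.nonempty_of_ncard_ne_zero (s := {b | g b = t}) (by omega)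

theorem min_ncard_setOf_eq_of_fiber {α β T : Type*} [Finite α] [Finite β] [Fintype T]
    {f : α → T} {g : β → T} {m : ℕ} (hm : 0 < m)
    (h : ∀ t, min {a | f a = t}.ncard m = min {b | g b = t}.ncard m)
    {p : α → Prop} {q : β → Prop} (hpq : ∀ a b, f a = g b → (p a ↔ q b)) :
    min {a | p a}.ncard m = min {b | q b}.ncard m := by
  classical
  -- `p` and `q` are the preimages of the same set of fibres, since `0 < m` makes a fibre of `f`
  -- empty exactly when the matching fibre of `g` is.
  let Q : Finset T := Finset.univ.filter fun t => ∃ a, f a = t ∧ p a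
  have hQ : ∀ t, t ∈ Q ↔ ∃ a, f a = t ∧ p a := by simp [Q]
  have hp : {a | p a} = f ⁻¹' Q := by
    ext a
    simp only [Set.mem_ofPred_eq, Set.mem_preimage, Finset.mem_coe, hQ]
    refine ⟨fun hpa => ⟨a, rfl, hpa⟩, fun ⟨a', ha', hpa'⟩ => ?_⟩
    obtain ⟨b, hb⟩ := exists_eq_of_min_ncard_fiber_eq hm (h (f a)) rfl
    exact (hpq a b hb.symm).2 ((hpq a' b (ha'.trans hb.symm)).1 hpa')
  have hq : {b | q b} = g ⁻¹' Q := by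
    ext b
    simp only [Set.mem_ofPred_eq, Set.mem_preimage, Finset.mem_coe, hQ]
    refine ⟨fun hqb => ?_, fun ⟨a, ha, hpa⟩ => (hpq a b ha).1 hpa⟩
    obtain ⟨a, ha⟩ := exists_eq_of_min_ncard_fiber_eq hm (h (g b)).symm rfl
    exact ⟨a, ha, (hpq a b ha).2 hqb⟩
  rw [hp, hq, min_ncard_preimage_eq h]

section MinRep

variable {β : Type*} {n : ℕ} (f : Fin n → β)

open Classical in
noncomputable def minRep (i : Fin n) : Fin n :=
  (Finset.univ.filter fun j => f j = f i).min' ⟨i, by simp⟩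

theorem apply_minRep (i : Fin n) : f (minRep f i) = f i := by
  classical
  unfold minRep
  generalize_proofs hne
  exact (Finset.mem_filter.1 (Finset.min'_mem _ hne)).2

theorem minRep_eq_of_apply_eq {i j : Fin n} (h : f i = f j) : minRep f i = minRep f j := by
  unfold minRep
  congr 1
  ext
  simp [h]

open Classical in
noncomputable def minReps : Finset (Fin n) := Finset.univ.filter fun i => minRep f i = i

theorem minRep_mem_minReps (i : Fin n) : minRep f i ∈ minReps f := by
  simpa [minReps] using minRep_eq_of_apply_eq f (apply_minRep f i)

theorem eq_of_apply_eq_of_mem_minReps {i j : Fin n} (hi : i ∈ minReps f) (hj : j ∈ minReps f)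
    (h : f i = f j) : i = j := by
  simp only [minReps, Finset.mem_filter, Finset.mem_univ, true_and] at hi hj
  rw [← hi, ← hj, minRep_eq_of_apply_eq f h]

end MinRep

theorem CQ.sat_iff_of_min_eq {k : ℕ} {q : CQ} (hq : q.degLE k) {a b : ℕ}
    (h : min a (k + 1) = min b (k + 1)) : q.sat a ↔ q.sat b := by
  cases q <;> simp only [CQ.degLE] at hq <;> simp only [CQ.sat]; all_goals omega

theorem CQ.min_eq_of_sat {k : ℕ} {q : CQ} (hq : q.degLE k) {a b : ℕ} (ha : q.sat a)
    (hb : q.sat b) : min a (k + 1) = min b (k + 1) := by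
  cases q <;> simp only [CQ.degLE] at hq <;> simp only [CQ.sat] at ha hb; all_goals omega

def CQ.cap (k N : ℕ) : CQ := if N ≤ k then .exact N else .atLeast (k + 1)

theorem CQ.cap_degLE (k N : ℕ) : (CQ.cap k N).degLE k := by
  unfold CQ.cap; split_ifs <;> simp only [CQ.degLE]; omega

theorem CQ.sat_cap (k N : ℕ) : (CQ.cap k N).sat N := by
  unfold CQ.cap; split_ifs <;> simp only [CQ.sat]; omega

theorem CQ.finite_setOf_degLE (k : ℕ) : {q : CQ | q.degLE k}.Finite := by
  refine (((Set.finite_Iic k).image CQ.exact).union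
    (Set.finite_singleton (CQ.atLeast (k + 1)))).subset ?_
  rintro (i | i) h <;> simp_all [CQ.degLE]

theorem sat_listConj [DecidableEq V] (l : List (Fml 𝒜 ℱ V)) (e : Env 𝒜 ℱ V D) :
    (listConj l).Sat e ↔ ∀ F ∈ l, F.Sat e := by
  induction l with
  | nil => simp [listConj, Fml.Sat]
  | cons F l ih =>
    simp only [listConj, List.foldr_cons, Fml.Sat, List.forall_mem_cons] at ih ⊢
    rw [ih]

theorem sat_signedConj [DecidableEq V] (l : List (Atom 𝒜 ℱ V)) (σ : Atom 𝒜 ℱ V → Bool)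
    (e : Env 𝒜 ℱ V D) :
    (signedConj l σ).Sat e ↔ ∀ a ∈ l, (a.toFml.Sat e ↔ σ a = true) := by
  rw [signedConj, sat_listConj, List.forall_mem_map]
  refine forall₂_congr fun a _ => ?_
  cases σ a <;> simp [Fml.Sat]

theorem mem_fv_listConj [DecidableEq V] (l : List (Fml 𝒜 ℱ V)) (x : V) :
    x ∈ (listConj l).fv ↔ ∃ F ∈ l, x ∈ F.fv := by
  induction l with
  | nil => simp [listConj, Fml.fv]
  | cons F l ih =>
    simp only [listConj] at ih
    simp [listConj, Fml.fv, ih]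

theorem Atom.fv_toFml [DecidableEq V] (a : Atom 𝒜 ℱ V) : a.toFml.fv = a.varset := by
  cases a <;> rfl

theorem mem_fv_signedConj [DecidableEq V] (l : List (Atom 𝒜 ℱ V)) (σ : Atom 𝒜 ℱ V → Bool)
    (x : V) : x ∈ (signedConj l σ).fv ↔ ∃ a ∈ l, x ∈ a.varset := by
  have hfv : ∀ a : Atom 𝒜 ℱ V, (if σ a then a.toFml else a.toFml.not).fv = a.varset := by
    intro a; cases σ a <;> simp [Fml.fv, Atom.fv_toFml]
  simp [signedConj, mem_fv_listConj, hfv]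

def Atom.rename {W : Type} (r : V → W) : Atom 𝒜 ℱ V → Atom 𝒜 ℱ W
  | .un A v => .un A (r v)
  | .bin f v w => .bin f (r v) (r w)
  | .eq v w => .eq (r v) (r w)

theorem Atom.varset_rename {W : Type} [DecidableEq V] [DecidableEq W] (r : V → W)
    (a : Atom 𝒜 ℱ V) : (a.rename r).varset = a.varset.image r := by
  cases a <;> simp [Atom.rename, Atom.varset, Finset.image_insert]

theorem Atom.sat_rename_iff {W : Type} [DecidableEq V] [DecidableEq W] (a : Atom 𝒜 ℱ V)
    (r : V → W) {e : Env 𝒜 ℱ V D} {e' : Env 𝒜 ℱ W D} (hun : e'.un = e.un)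
    (hbin : e'.bin = e.bin) (hvar : ∀ w ∈ a.varset, e'.var (r w) = e.var w) :
    (a.rename r).toFml.Sat e' ↔ a.toFml.Sat e := by
  cases a <;> simp_all [Atom.rename, Atom.toFml, Fml.Sat, Atom.varset]

theorem Atom.sat_congr [DecidableEq V] (a : Atom 𝒜 ℱ V) {e e' : Env 𝒜 ℱ V D}
    (hun : e'.un = e.un) (hbin : e'.bin = e.bin) (hvar : ∀ w ∈ a.varset, e'.var w = e.var w) :
    a.toFml.Sat e' ↔ a.toFml.Sat e := by
  cases a <;> simp_all [Atom.toFml, Fml.Sat, Atom.varset]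

theorem Fml.sat_congr_of_qdepth_eq_zero [DecidableEq V] {D' : Type} {e : Env 𝒜 ℱ V D}
    {e' : Env 𝒜 ℱ V D'} :
    ∀ G : Fml 𝒜 ℱ V, G.qdepth = 0 →
      (∀ a : Atom 𝒜 ℱ V, a.varset ⊆ G.fv → (a.toFml.Sat e ↔ a.toFml.Sat e')) →
      (G.Sat e ↔ G.Sat e')
  | .un A v, _, h => h (.un A v) subset_rfl
  | .bin f v w, _, h => h (.bin f v w) subset_rfl
  | .eq v w, _, h => h (.eq v w) subset_rfl
  | .fls, _, _ => Iff.rfl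
  | .and F G, hq, h => by
    simp only [Fml.qdepth, Nat.max_eq_zero_iff] at hq
    exact and_congr (sat_congr_of_qdepth_eq_zero F hq.1 fun a ha => h a
        (ha.trans Finset.subset_union_left))
      (sat_congr_of_qdepth_eq_zero G hq.2 fun a ha => h a (ha.trans Finset.subset_union_right))
  | .or F G, hq, h => by
    simp only [Fml.qdepth, Nat.max_eq_zero_iff] at hq
    exact or_congr (sat_congr_of_qdepth_eq_zero F hq.1 fun a ha => h a
        (ha.trans Finset.subset_union_left))
      (sat_congr_of_qdepth_eq_zero G hq.2 fun a ha => h a (ha.trans Finset.subset_union_right))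
  | .not F, hq, h => not_congr (sat_congr_of_qdepth_eq_zero F hq h)

theorem isExtAtom_eq_true [DecidableEq V] {xs : Finset V} {x : V} {a : Atom 𝒜 ℱ V} :
    isExtAtom xs x a = true ↔ a.varset ⊆ insert x xs ∧ x ∈ a.varset := by
  simp [isExtAtom]

section ExtensionTypes

variable [Fintype 𝒜] [Fintype ℱ] [Fintype V] [DecidableEq V]

theorem mem_atomsOn [DecidableEq 𝒜] [DecidableEq ℱ] {xs : Finset V} {a : Atom 𝒜 ℱ V} :
    a ∈ atomsOn 𝒜 ℱ xs ↔ a.varset ⊆ xs := by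
  simp [atomsOn]

theorem mem_extAtoms [DecidableEq 𝒜] [DecidableEq ℱ] {xs : Finset V} {x : V}
    {a : Atom 𝒜 ℱ V} : a ∈ extAtoms 𝒜 ℱ xs x ↔ isExtAtom xs x a = true := by
  simp [extAtoms]

theorem mem_extSigns [DecidableEq 𝒜] [DecidableEq ℱ] {xs : Finset V} {x : V}
    {τ : Atom 𝒜 ℱ V → Bool} : τ ∈ extSigns 𝒜 ℱ xs x ↔ extSignB xs x τ = true := by
  simp [extSigns]

theorem gccatSignB_eq_true {xs : Finset V} {σ : Atom 𝒜 ℱ V → Bool} :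
    gccatSignB xs σ = true ↔ (∀ i ∈ xs, ∀ j ∈ xs, σ (.eq i j) = decide (i = j)) ∧
      ∀ a : Atom 𝒜 ℱ V, ¬ a.varset ⊆ xs → σ a = false := by
  simp [gccatSignB, or_iff_not_imp_left]

theorem extSignB_eq_true {xs : Finset V} {x : V} {τ : Atom 𝒜 ℱ V → Bool} :
    extSignB xs x τ = true ↔ τ (.eq x x) = true ∧
      (∀ v ∈ xs, τ (.eq x v) = false ∧ τ (.eq v x) = false) ∧
      ∀ a : Atom 𝒜 ℱ V, isExtAtom xs x a = false → τ a = false := by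
  simp [extSignB, or_iff_not_imp_left, and_assoc]

end ExtensionTypes

theorem Env.updVar_var_self [DecidableEq V] (e : Env 𝒜 ℱ V D) (x : V) (d : D) :
    (e.updVar x d).var x = d :=
  Function.update_self ..

theorem Env.updVar_var_of_ne [DecidableEq V] (e : Env 𝒜 ℱ V D) {x v : V} (h : v ≠ x) (d : D) :
    (e.updVar x d).var v = e.var v :=
  Function.update_of_ne h ..

open Classical in
noncomputable def extSignOf [DecidableEq V] (xs : Finset V) (x : V) (e : Env 𝒜 ℱ V D) (d : D) :
    Atom 𝒜 ℱ V → Bool :=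
  fun a => isExtAtom xs x a && decide (a.toFml.Sat (e.updVar x d))

section ExtSignOf

variable [DecidableEq V] {xs : Finset V} {x : V} {e : Env 𝒜 ℱ V D}

theorem extSignOf_eq_true {d : D} {a : Atom 𝒜 ℱ V} (ha : isExtAtom xs x a = true) :
    extSignOf xs x e d a = true ↔ a.toFml.Sat (e.updVar x d) := by
  simp [extSignOf, ha]

theorem extSignOf_of_isExtAtom_eq_false {d : D} {a : Atom 𝒜 ℱ V}
    (ha : isExtAtom xs x a = false) : extSignOf xs x e d a = false := by
  simp [extSignOf, ha]

theorem isExtAtom_eq_left {v : V} (hv : v ∈ xs) :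
    isExtAtom xs x (.eq x v : Atom 𝒜 ℱ V) = true :=
  isExtAtom_eq_true.2 ⟨by simp [Atom.varset, Finset.insert_subset_iff, hv], by simp [Atom.varset]⟩

theorem extSignB_extSignOf [Fintype 𝒜] [Fintype ℱ] [Fintype V] (hx : x ∉ xs) {d : D}
    (hd : ∀ v ∈ xs, e.var v ≠ d) : extSignB xs x (extSignOf xs x e d) = true := by
  have hne : ∀ v ∈ xs, v ≠ x := fun v hv h => hx (h ▸ hv)
  refine extSignB_eq_true.2 ⟨?_, fun v hv => ?_, fun a ha => extSignOf_of_isExtAtom_eq_false ha⟩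
  · exact (extSignOf_eq_true (isExtAtom_eq_true.2 (by simp [Atom.varset]))).2 rfl
  · have hsat : (e.updVar x d).var x ≠ (e.updVar x d).var v := by
      rw [e.updVar_var_self, e.updVar_var_of_ne (hne v hv)]
      exact (hd v hv).symm
    constructor <;> simp [extSignOf, Atom.toFml, Fml.Sat, hsat, Ne.symm hsat]

theorem eq_var_of_extSignOf_eq (hx : x ∉ xs) {v : V} (hv : v ∈ xs) {d : D}
    (h : extSignOf xs x e d = extSignOf xs x e (e.var v)) : d = e.var v := by
  have hsat := congrFun h (.eq x v)
  rw [Bool.eq_iff_iff, extSignOf_eq_true (isExtAtom_eq_left hv),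
    extSignOf_eq_true (isExtAtom_eq_left hv)] at hsat
  have hvx : v ≠ x := fun h => hx (h ▸ hv)
  simpa [Atom.toFml, Fml.Sat, Env.updVar_var_self, Env.updVar_var_of_ne _ hvx] using hsat

theorem sat_extFml_updVar_iff [Fintype 𝒜] [DecidableEq 𝒜] [Fintype ℱ] [DecidableEq ℱ] [Fintype V]
    {τ : Atom 𝒜 ℱ V → Bool} (hτ : extSignB xs x τ = true) {d : D} :
    (extFml xs x τ).Sat (e.updVar x d) ↔ extSignOf xs x e d = τ := by
  rw [extFml, sat_signedConj]
  constructor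
  · intro h
    funext a
    cases ha : isExtAtom xs x a
    · rw [extSignOf_of_isExtAtom_eq_false ha, (extSignB_eq_true.1 hτ).2.2 a ha]
    · exact Bool.eq_iff_iff.2 ((extSignOf_eq_true ha).trans (h a (mem_extAtoms.2 ha)))
  · rintro rfl a ha
    exact (extSignOf_eq_true (mem_extAtoms.1 ha)).symm

-- Only the values of the variables in `xs` can violate `extSignB`, and each of them is alone in
-- its fibre because of the atom `x = v`.
theorem ncard_extSignOf_fiber [Fintype 𝒜] [Fintype ℱ] [Fintype V] (hx : x ∉ xs)
    {τ : Atom 𝒜 ℱ V → Bool} (hτ : extSignB xs x τ = false) :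
    {d | extSignOf xs x e d = τ}.ncard =
      if ∃ v ∈ xs, extSignOf xs x e (e.var v) = τ then 1 else 0 := by
  split_ifs with h
  · obtain ⟨v, hv, rfl⟩ := h
    exact Set.ncard_eq_one.2
      ⟨e.var v, Set.ext fun d => ⟨eq_var_of_extSignOf_eq hx hv, fun hd => hd ▸ rfl⟩⟩
  · suffices hempty : {d | extSignOf xs x e d = τ} = ∅ by rw [hempty, Set.ncard_empty]
    refine Set.eq_empty_of_forall_notMem fun d hd => ?_
    by_cases hnamed : ∃ v ∈ xs, e.var v = d
    · obtain ⟨v, hv, rfl⟩ := hnamed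
      exact h ⟨v, hv, hd⟩
    · simp only [not_exists, not_and] at hnamed
      have := extSignB_extSignOf hx hnamed
      rw [show extSignOf xs x e d = τ from hd, hτ] at this
      exact Bool.false_ne_true this

end ExtSignOf

namespace CSData

variable {n : ℕ} (c : CSData 𝒜 ℱ n)

def rep (j : Fin n) : Fin n := if j ∈ c.xs then j else c.ι j

-- Moves the variable `v` bound by a counting quantifier of `F` into the slot `none` of the
-- extension atoms, and every other variable to its representative in `c.xs`.
def bindRename (v w : Option (Fin n)) : Option (Fin n) := if w = v then none else w.map c.rep

theorem mem_xsO {w : Option (Fin n)} : w ∈ c.xsO ↔ ∃ i ∈ c.xs, some i = w := by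
  simp [xsO]

theorem none_notMem_xsO : (none : Option (Fin n)) ∉ c.xsO := by
  simp [xsO]

theorem rep_mem (hι : ∀ y ∉ c.xs, c.ι y ∈ c.xs) (j : Fin n) : c.rep j ∈ c.xs := by
  unfold rep; split_ifs with hj
  exacts [hj, hι j hj]

variable [Fintype 𝒜] [Fintype ℱ]

structure Realize (e : Env 𝒜 ℱ (Option (Fin n)) D) : Prop where
  var_ι : ∀ y ∉ c.xs, e.var (some y) = e.var (some (c.ι y))
  sat_iff_σ : ∀ a : Atom 𝒜 ℱ (Option (Fin n)), a.varset ⊆ c.xsO → (a.toFml.Sat e ↔ c.σ a = true)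
  γ_sat : ∀ τ, extSignB c.xsO none τ = true →
    (c.γ τ).sat {d | extSignOf c.xsO none e d = τ}.ncard

theorem sat_csFml_iff [DecidableEq 𝒜] [DecidableEq ℱ] (e : Env 𝒜 ℱ (Option (Fin n)) D) :
    (csFml c).Sat e ↔ c.Realize e := by
  simp only [csFml, gccatFml, Fml.Sat, sat_listConj, sat_signedConj, List.forall_mem_map,
    Finset.mem_toList, Finset.mem_sdiff, Finset.mem_univ, true_and, mem_atomsOn, mem_extSigns]
  have hfiber : ∀ τ, extSignB c.xsO none τ = true →
      {d | (extFml c.xsO none τ).Sat (e.updVar none d)} = {d | extSignOf c.xsO none e d = τ} :=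
    fun τ hτ => Set.ext fun _ => sat_extFml_updVar_iff hτ
  exact ⟨fun ⟨hι, hσ, hγ⟩ => ⟨hι, hσ, fun τ hτ => hfiber τ hτ ▸ hγ τ hτ⟩,
    fun he => ⟨he.var_ι, he.sat_iff_σ, fun τ hτ => hfiber τ hτ ▸ he.γ_sat τ hτ⟩⟩

def atomSign (τ : Atom 𝒜 ℱ (Option (Fin n)) → Bool) (b : Atom 𝒜 ℱ (Option (Fin n))) : Bool :=
  if none ∈ b.varset then τ b else c.σ b

namespace Realize

variable {c} {D' : Type} {e : Env 𝒜 ℱ (Option (Fin n)) D} {e' : Env 𝒜 ℱ (Option (Fin n)) D'}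

theorem var_rep (he : c.Realize e) (j : Fin n) : e.var (some (c.rep j)) = e.var (some j) := by
  unfold rep
  split_ifs with hj
  exacts [rfl, (he.var_ι j hj).symm]

theorem sat_iff_σ_rename (hι : ∀ y ∉ c.xs, c.ι y ∈ c.xs) (he : c.Realize e)
    {a : Atom 𝒜 ℱ (Option (Fin n))} (ha : none ∉ a.varset) :
    a.toFml.Sat e ↔ c.σ (a.rename (Option.map c.rep)) = true := by
  rw [← he.sat_iff_σ, Atom.sat_rename_iff a _ rfl rfl]
  · rintro (_ | j) hj
    exacts [absurd hj ha, he.var_rep j]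
  · rw [Atom.varset_rename, Finset.image_subset_iff]
    rintro (_ | j) hj
    exacts [absurd hj ha, c.mem_xsO.2 ⟨_, c.rep_mem hι j, rfl⟩]

theorem atom_sat_iff_sat (hι : ∀ y ∉ c.xs, c.ι y ∈ c.xs) (he : c.Realize e) (he' : c.Realize e')
    {a : Atom 𝒜 ℱ (Option (Fin n))} (ha : none ∉ a.varset) :
    a.toFml.Sat e ↔ a.toFml.Sat e' :=
  (he.sat_iff_σ_rename hι ha).trans (he'.sat_iff_σ_rename hι ha).symm

theorem sat_updVar_var_iff (he : c.Realize e) {i : Fin n} (hi : i ∈ c.xs)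
    {a : Atom 𝒜 ℱ (Option (Fin n))} (ha : isExtAtom c.xsO none a = true) :
    a.toFml.Sat (e.updVar none (e.var (some i))) ↔
      c.σ (a.rename (Function.update id none (some i))) = true := by
  rw [← he.sat_iff_σ,
    Atom.sat_rename_iff a _ (e := e.updVar none (e.var (some i))) (e' := e) rfl rfl]
  · rintro (_ | j) _
    exacts [(e.updVar_var_self _ _).symm, (e.updVar_var_of_ne (Option.some_ne_none j) _).symm]
  · rw [Atom.varset_rename, Finset.image_subset_iff]
    intro w hw
    rcases Finset.mem_insert.1 ((isExtAtom_eq_true.1 ha).1 hw) with rfl | hw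
    · exact c.mem_xsO.2 ⟨i, hi, rfl⟩
    · rwa [Function.update_of_ne (ne_of_mem_of_not_mem hw c.none_notMem_xsO)]

theorem extSignOf_var_eq (he : c.Realize e) (he' : c.Realize e') {i : Fin n} (hi : i ∈ c.xs) :
    extSignOf c.xsO none e (e.var (some i)) = extSignOf c.xsO none e' (e'.var (some i)) := by
  funext a
  cases ha : isExtAtom c.xsO none a
  · rw [extSignOf_of_isExtAtom_eq_false ha, extSignOf_of_isExtAtom_eq_false ha]
  · rw [Bool.eq_iff_iff, extSignOf_eq_true ha, extSignOf_eq_true ha,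
      he.sat_updVar_var_iff hi ha, he'.sat_updVar_var_iff hi ha]

theorem sat_updVar_iff (hι : ∀ y ∉ c.xs, c.ι y ∈ c.xs) (he : c.Realize e)
    {v : Option (Fin n)} {d : D} {a : Atom 𝒜 ℱ (Option (Fin n))}
    (ha : none ∈ a.varset → v = none) :
    a.toFml.Sat (e.updVar v d) ↔
      c.atomSign (extSignOf c.xsO none e d) (a.rename (c.bindRename v)) = true := by
  have hvar : ∀ w ∈ a.varset,
      (e.updVar none d).var (c.bindRename v w) = (e.updVar v d).var w := by
    intro w hw
    by_cases hwv : w = v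
    · simp [bindRename, hwv, Env.updVar_var_self]
    · obtain ⟨j, rfl⟩ := Option.ne_none_iff_exists'.1 fun hw' =>
        hwv (hw'.trans (ha (hw' ▸ hw)).symm)
      simp only [bindRename, if_neg hwv, Option.map_some, e.updVar_var_of_ne hwv,
        e.updVar_var_of_ne (Option.some_ne_none _), he.var_rep]
  rw [← Atom.sat_rename_iff a _ (e := e.updVar v d) (e' := e.updVar none d) rfl rfl hvar]
  set b := a.rename (c.bindRename v)
  have hb : b.varset ⊆ insert none c.xsO := by
    rw [Atom.varset_rename, Finset.image_subset_iff]
    rintro w -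
    unfold bindRename
    split_ifs
    · exact Finset.mem_insert_self _ _
    · rcases w with _ | j
      exacts [Finset.mem_insert_self _ _,
        Finset.mem_insert_of_mem (c.mem_xsO.2 ⟨_, c.rep_mem hι j, rfl⟩)]
  by_cases hn : none ∈ b.varset
  · rw [atomSign, if_pos hn, extSignOf_eq_true (isExtAtom_eq_true.2 ⟨hb, hn⟩)]
  · rw [atomSign, if_neg hn, ← he.sat_iff_σ b fun w hw => ?_]
    · exact Atom.sat_congr b rfl rfl fun w hw =>
        e.updVar_var_of_ne (ne_of_mem_of_not_mem hw hn) d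
    · exact (Finset.mem_insert.1 (hb hw)).resolve_left (ne_of_mem_of_not_mem hw hn)

theorem sat_updVar_iff_of_extSignOf_eq (hι : ∀ y ∉ c.xs, c.ι y ∈ c.xs) (he : c.Realize e)
    (he' : c.Realize e') {v : Option (Fin n)} {G : Fml 𝒜 ℱ (Option (Fin n))}
    (hG : G.qdepth = 0) (hv : none ∈ G.fv → v = none) {d : D} {d' : D'}
    (h : extSignOf c.xsO none e d = extSignOf c.xsO none e' d') :
    G.Sat (e.updVar v d) ↔ G.Sat (e'.updVar v d') :=
  Fml.sat_congr_of_qdepth_eq_zero G hG fun _ ha => by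
    rw [he.sat_updVar_iff hι (hv <| ha ·), he'.sat_updVar_iff hι (hv <| ha ·), h]

variable [DecidableEq 𝒜] [DecidableEq ℱ] {k : ℕ}

theorem min_ncard_extSignOf_fiber_eq (hc : c.WF k) (he : c.Realize e) (he' : c.Realize e')
    (τ : Atom 𝒜 ℱ (Option (Fin n)) → Bool) :
    min {d | extSignOf c.xsO none e d = τ}.ncard (k + 1) =
      min {d' | extSignOf c.xsO none e' d' = τ}.ncard (k + 1) := by
  cases hτ : extSignB c.xsO none τ
  · have hnamed : (∃ v ∈ c.xsO, extSignOf c.xsO none e (e.var v) = τ) ↔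
        ∃ v ∈ c.xsO, extSignOf c.xsO none e' (e'.var v) = τ := by
      refine exists_congr fun v => and_congr_right fun hv => ?_
      obtain ⟨i, hi, rfl⟩ := c.mem_xsO.1 hv
      rw [he.extSignOf_var_eq he' hi]
    rw [ncard_extSignOf_fiber c.none_notMem_xsO hτ, ncard_extSignOf_fiber c.none_notMem_xsO hτ]
    simp only [hnamed]
  · exact CQ.min_eq_of_sat (hc.2.2 τ) (he.γ_sat τ hτ) (he'.γ_sat τ hτ)

theorem min_ncard_sat_updVar_eq [Finite D] [Finite D'] (hc : c.WF k) (he : c.Realize e)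
    (he' : c.Realize e') {v : Option (Fin n)} {G : Fml 𝒜 ℱ (Option (Fin n))}
    (hG : G.qdepth = 0) (hv : none ∈ G.fv → v = none) :
    min {d | G.Sat (e.updVar v d)}.ncard (k + 1) =
      min {d' | G.Sat (e'.updVar v d')}.ncard (k + 1) :=
  min_ncard_setOf_eq_of_fiber k.succ_pos (min_ncard_extSignOf_fiber_eq hc he he')
    fun _ _ => sat_updVar_iff_of_extSignOf_eq hc.1 he he' hG hv

theorem sat_iff_sat_of_qdepth_le_one [Finite D] [Finite D'] (hc : c.WF k)
    (he : c.Realize e) (he' : c.Realize e') :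
    ∀ F : Fml 𝒜 ℱ (Option (Fin n)), F.qdepth ≤ 1 → F.DegLE k → none ∉ F.fv →
      (F.Sat e ↔ F.Sat e')
  | .un A w, _, _, hF => he.atom_sat_iff_sat hc.1 he' (a := .un A w) hF
  | .bin f w₁ w₂, _, _, hF => he.atom_sat_iff_sat hc.1 he' (a := .bin f w₁ w₂) hF
  | .eq w₁ w₂, _, _, hF => he.atom_sat_iff_sat hc.1 he' (a := .eq w₁ w₂) hF
  | .fls, _, _, _ => Iff.rfl
  | .and F G, hq, hdeg, hF => by
    simp only [Fml.qdepth, max_le_iff] at hq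
    simp only [Fml.fv, Finset.mem_union, not_or] at hF
    exact and_congr (sat_iff_sat_of_qdepth_le_one hc he he' F hq.1 hdeg.1 hF.1)
      (sat_iff_sat_of_qdepth_le_one hc he he' G hq.2 hdeg.2 hF.2)
  | .or F G, hq, hdeg, hF => by
    simp only [Fml.qdepth, max_le_iff] at hq
    simp only [Fml.fv, Finset.mem_union, not_or] at hF
    exact or_congr (sat_iff_sat_of_qdepth_le_one hc he he' F hq.1 hdeg.1 hF.1)
      (sat_iff_sat_of_qdepth_le_one hc he he' G hq.2 hdeg.2 hF.2)
  | .not F, hq, hdeg, hF => not_congr (sat_iff_sat_of_qdepth_le_one hc he he' F hq hdeg hF)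
  | .cnt q v G, hq, hdeg, hF => by
    have hG : G.qdepth = 0 := by simp only [Fml.qdepth] at hq; omega
    have hv : none ∈ G.fv → v = none := fun h =>
      by_contra fun hv => hF (Finset.mem_erase.2 ⟨Ne.symm hv, h⟩)
    exact CQ.sat_iff_of_min_eq hdeg.1 (min_ncard_sat_updVar_eq hc he he' hG hv)

end Realize

theorem fv_csFml [DecidableEq 𝒜] [DecidableEq ℱ] :
    (csFml c).fv = Finset.univ.image fun i => some i := by
  ext w
  rcases w with _ | i
  · simp only [Finset.mem_image, reduceCtorEq, and_false, exists_false, iff_false]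
    simp only [csFml, gccatFml, Fml.fv, Finset.mem_union, mem_fv_listConj, mem_fv_signedConj,
      List.mem_map, not_or]
    refine ⟨?_, fun ⟨a, ha, h⟩ => c.none_notMem_xsO (mem_atomsOn.1 ha h), ?_⟩
    · rintro ⟨_, ⟨y, -, rfl⟩, h⟩
      simp [Fml.fv] at h
    · rintro ⟨_, ⟨τ, -, rfl⟩, h⟩
      simp [Fml.fv] at h
  · simp only [Finset.mem_image, Finset.mem_univ, Option.some_inj, true_and, csFml, gccatFml,
      Fml.fv, Finset.mem_union, mem_fv_listConj, mem_fv_signedConj, List.mem_map]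
    refine iff_of_true ?_ ⟨i, rfl⟩
    by_cases hi : i ∈ c.xs
    · refine Or.inr (Or.inl ⟨.eq (some i) (some i), mem_atomsOn.2 ?_, by simp [Atom.varset]⟩)
      simpa [Atom.varset] using c.mem_xsO.2 ⟨i, hi, rfl⟩
    · exact Or.inl ⟨_, ⟨i, by simpa using hi, rfl⟩, by simp [Fml.fv]⟩

theorem finite_setOf_WF [DecidableEq 𝒜] [DecidableEq ℱ] (k : ℕ) :
    {c : CSData 𝒜 ℱ n | c.WF k}.Finite := by
  refine ((Set.finite_univ.prod (Set.finite_univ.prod (Set.finite_univ.prod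
    (Set.Finite.pi (t := fun _ => {q : CQ | q.degLE k}) fun _ => CQ.finite_setOf_degLE k)))).image
    fun p => CSData.mk p.1 p.2.1 p.2.2.1 p.2.2.2).subset ?_
  rintro ⟨xs, ι, σ, γ⟩ hc
  exact ⟨(xs, ι, σ, γ), by simpa using hc.2.2, rfl⟩

end CSData

namespace Env

variable {n : ℕ} (e : Env 𝒜 ℱ (Option (Fin n)) D)

noncomputable def reps : Finset (Fin n) := minReps fun i => e.var (some i)

open Classical in
noncomputable def countingStarType (k : ℕ) : CSData 𝒜 ℱ n where
  xs := e.reps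
  ι := minRep fun i => e.var (some i)
  σ a := decide (a.varset ⊆ e.reps.image (fun i => some i) ∧ a.toFml.Sat e)
  γ τ := CQ.cap k {d | extSignOf (e.reps.image fun i => some i) none e d = τ}.ncard

theorem countingStarType_σ {k : ℕ} {a : Atom 𝒜 ℱ (Option (Fin n))} :
    (e.countingStarType k).σ a = true ↔ a.varset ⊆ (e.countingStarType k).xsO ∧ a.toFml.Sat e := by
  simp [countingStarType, CSData.xsO]

variable [Fintype 𝒜] [Fintype ℱ]

theorem countingStarType_WF [DecidableEq 𝒜] [DecidableEq ℱ] (k : ℕ) :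
    (e.countingStarType k).WF k := by
  refine ⟨fun y _ => minRep_mem_minReps _ y, gccatSignB_eq_true.2 ⟨?_, fun a ha => ?_⟩,
    fun τ => CQ.cap_degLE k _⟩
  · intro _ hi _ hj
    obtain ⟨i, hi', rfl⟩ := (CSData.mem_xsO _).1 hi
    obtain ⟨j, hj', rfl⟩ := (CSData.mem_xsO _).1 hj
    rw [Bool.eq_iff_iff, countingStarType_σ, decide_eq_true_iff, Option.some_inj]
    exact ⟨fun h => eq_of_apply_eq_of_mem_minReps _ hi' hj' h.2,
      fun h => ⟨by simp [Atom.varset, Finset.insert_subset_iff, hi, hj], h ▸ rfl⟩⟩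
  · rw [← Bool.not_eq_true, countingStarType_σ]
    exact fun h => ha h.1

theorem realize_countingStarType (k : ℕ) : (e.countingStarType k).Realize e where
  var_ι y _ := (apply_minRep (fun i => e.var (some i)) y).symm
  sat_iff_σ _ ha := by rw [countingStarType_σ, and_iff_right ha]
  γ_sat _ _ := CQ.sat_cap k _

end Env

/-- **Depth-one normal form.** Let `F` be a first-order formula
with counting quantifiers, of quantifier depth at most one, of counting degree
at most `k`, with `FV(F) ⊆ {x₁,…,xₙ}`.  Then `F` is logically equivalent (over
all finite domains) to a finite disjunction of `k`-counting-star formulas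
`F_C` with `FV(F_C) = {x₁,…,xₙ}`. -/
theorem depth_one_normal_form {𝒜 ℱ : Type}
    [Fintype 𝒜] [DecidableEq 𝒜] [Fintype ℱ] [DecidableEq ℱ] {n k : ℕ}
    (F : Fml 𝒜 ℱ (Option (Fin n)))
    (hfv : (none : Option (Fin n)) ∉ F.fv)
    (hq : F.qdepth ≤ 1) (hdeg : F.DegLE k) :
    ∃ S : List (CSData 𝒜 ℱ n),
      (∀ c ∈ S, c.WF k ∧
        (csFml c).fv = (Finset.univ : Finset (Fin n)).image (fun i => some i)) ∧
      ∀ (D : Type) [Finite D] (e : Env 𝒜 ℱ (Option (Fin n)) D),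
        F.Sat e ↔ ∃ c ∈ S, (csFml c).Sat e := by
  classical
  let T := {c : CSData 𝒜 ℱ n | c.WF k ∧ ∀ (D : Type) [Finite D]
    (e : Env 𝒜 ℱ (Option (Fin n)) D), (csFml c).Sat e → F.Sat e}
  have hT : T.Finite := (CSData.finite_setOf_WF k).subset fun _ hc => hc.1
  have hmem : ∀ c, c ∈ hT.toFinset.toList ↔ c ∈ T := by simp
  refine ⟨hT.toFinset.toList, fun c hc => ⟨((hmem c).1 hc).1, c.fv_csFml⟩,
    fun D _ e => ⟨fun hF => ?_, fun ⟨c, hc, hce⟩ => ((hmem c).1 hc).2 D e hce⟩⟩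
  have hWF := e.countingStarType_WF k
  have he := e.realize_countingStarType k
  refine ⟨e.countingStarType k, (hmem _).2 ⟨hWF, fun D' _ e' he' => ?_⟩,
    (CSData.sat_csFml_iff _ e).2 he⟩
  exact (he.sat_iff_sat_of_qdepth_le_one hWF ((CSData.sat_csFml_iff _ e').1 he') F hq hdeg hfv).1 hF
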